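/- Fix b > −3/16 and set γ = 1 + (16/3)b (so γ > 0). Then the function s ↦ M(φ_{1,2s}) := ∫_ℝ Φ_{1,2s}(x)² dx, defined for s ∈ (−1, 1], is continuous, strictly increasing, and maps (−1, 1] bijectively onto (0, 4π/√γ]. -/

import Mathlib

open MeasureTheory Real Set

/-- The soliton profile of the derivative NLS after gauge transformation:
the algebraic profile when `c = 2√ω`, the bright profile when `-2√ω < c < 2√ω`. -/
noncomputable def Phi (γ ω c x : ℝ) : ℝ :=
  if c = 2 * Real.sqrt ω then
    Real.sqrt (4 * c / ((c * x) ^ 2 + γ))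
  else
    Real.sqrt (2 * (4 * ω - c ^ 2) /
      (Real.sqrt (c ^ 2 + γ * (4 * ω - c ^ 2)) * Real.cosh (Real.sqrt (4 * ω - c ^ 2) * x) - c))

/-- Mass of the soliton with parameters `(ω, c) = (1, 2s)`. -/
noncomputable def massCurve (γ s : ℝ) : ℝ := ∫ x : ℝ, (Phi γ 1 (2 * s) x) ^ 2

open Filter Topology

/-! For `|s| < 1` the squared bright profile is a multiple of `(cosh (k x) - a)⁻¹` with
`|a| < 1`, and `x ↦ arctan ((eˣ - a) / √(1 - a²))` is, up to a constant, an antiderivative of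
`(cosh x - a)⁻¹`; its limits at `±∞` give `∫ (cosh x - a)⁻¹ = 2 arccos (-a) / √(1 - a²)`. Hence
`M(φ_{1,2s}) = 4 / √γ * arccos (-s / √(s² + γ (1 - s²)))`, and the algebraic soliton at `s = 1`,
whose mass is `4π / √γ`, obeys the same formula. This closed form is continuous and strictly
increasing on `[-1, 1]` and vanishes at `-1`, so the intermediate value theorem gives the bijection
onto `(0, 4π / √γ]`. -/

lemma one_add_sq_div_two_le_cosh (x : ℝ) : 1 + x ^ 2 / 2 ≤ cosh x := by
  simpa [Finset.sum_range_succ] using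
    sum_le_hasSum (Finset.range 2) (fun i _ => by rw [pow_mul]; positivity) x.hasSum_cosh

lemma integrable_inv_cosh_sub {a : ℝ} (ha : a < 1) :
    Integrable fun x => (cosh x - a)⁻¹ := by
  set m := min (1 - a) (1 / 2)
  have hm : 0 < m := lt_min (by linarith) (by norm_num)
  refine (integrable_inv_one_add_sq.const_mul m⁻¹).mono' (by fun_prop) (ae_of_all _ fun x => ?_)
  have hlow : m * (1 + x ^ 2) ≤ cosh x - a := by
    nlinarith [one_add_sq_div_two_le_cosh x, min_le_left (1 - a) (1 / 2),
      min_le_right (1 - a) (1 / 2), sq_nonneg x]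
  rw [norm_inv, Real.norm_of_nonneg (by linarith [one_le_cosh x]), ← mul_inv]
  exact inv_anti₀ (by positivity) hlow

lemma hasDerivAt_arctan_exp_sub {a r : ℝ} (hr : 0 < r) (hra : r ^ 2 = 1 - a ^ 2) (x : ℝ) :
    HasDerivAt (fun x => 2 / r * arctan ((exp x - a) / r)) (cosh x - a)⁻¹ x := by
  refine ((((hasDerivAt_exp x).sub_const a).div_const r).arctan.const_mul (2 / r)).congr_deriv ?_
  have hden : 0 < exp x ^ 2 + 1 - 2 * exp x * a := by nlinarith [sq_nonneg (exp x - a)]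
  rw [cosh_eq, exp_neg]
  field_simp
  rw [hra]
  ring

lemma arccos_neg_eq_pi_div_two_add_arctan {a : ℝ} (ha : |a| < 1) :
    arccos (-a) = π / 2 + arctan (a / √(1 - a ^ 2)) := by
  rw [arccos_neg, arccos_eq_pi_div_two_sub_arcsin, arcsin_eq_arctan (abs_lt.mp ha)]
  ring

lemma integral_inv_cosh_sub {a : ℝ} (ha : |a| < 1) :
    ∫ x, (cosh x - a)⁻¹ = 2 * arccos (-a) / √(1 - a ^ 2) := by
  have ha' := abs_lt.mp ha
  set r := √(1 - a ^ 2)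
  have hr : 0 < r := sqrt_pos.mpr (by nlinarith)
  have hra : r ^ 2 = 1 - a ^ 2 := sq_sqrt (by nlinarith)
  have hbot : Tendsto (fun x => 2 / r * arctan ((exp x - a) / r)) atBot
      (𝓝 (2 / r * arctan ((0 - a) / r))) :=
    ((continuous_arctan.tendsto _).comp
      ((tendsto_exp_atBot.sub_const a).div_const r)).const_mul _
  have htop : Tendsto (fun x => 2 / r * arctan ((exp x - a) / r)) atTop (𝓝 (2 / r * (π / 2))) :=
    ((tendsto_nhds_of_tendsto_nhdsWithin tendsto_arctan_atTop).comp
      ((tendsto_atTop_add_const_right _ (-a) tendsto_exp_atTop).atTop_div_const hr)).const_mul _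
  rw [integral_of_hasDerivAt_of_tendsto (hasDerivAt_arctan_exp_sub hr hra)
    (integrable_inv_cosh_sub ha'.2) hbot htop, arccos_neg_eq_pi_div_two_add_arctan ha,
    zero_sub, neg_div, arctan_neg]
  ring

lemma integral_inv_mul_sq_add {a γ : ℝ} (ha : 0 < a) (hγ : 0 < γ) :
    ∫ x, ((a * x) ^ 2 + γ)⁻¹ = π / (a * √γ) := by
  have hsγ := sqrt_pos.mpr hγ
  have h : ∀ x, ((a * x) ^ 2 + γ)⁻¹ = γ⁻¹ * (1 + (a / √γ * x) ^ 2)⁻¹ := fun x => by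
    rw [← mul_inv, mul_pow, mul_pow, div_pow, sq_sqrt hγ.le]
    field_simp
    ring
  rw [funext h, integral_const_mul, Measure.integral_comp_mul_left (fun y => (1 + y ^ 2)⁻¹),
    integral_univ_inv_one_add_sq, smul_eq_mul, abs_of_pos (by positivity)]
  field_simp
  rw [sq_sqrt hγ.le]

/-- `c / B` for `(ω, c) = (1, 2s)`, where `B = √(c² + γ (4ω - c²))` is the coefficient of
`cosh` in the bright profile. -/
noncomputable def speedRatio (γ s : ℝ) : ℝ := s / √(s ^ 2 + γ * (1 - s ^ 2))

section speedRatio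

variable {γ s : ℝ}

lemma sq_add_mul_one_sub_sq_pos (hγ : 0 < γ) (hs : s ∈ Icc (-1) 1) :
    0 < s ^ 2 + γ * (1 - s ^ 2) := by
  have h1 : 0 ≤ 1 - s ^ 2 := by nlinarith [hs.1, hs.2]
  rcases le_total γ 1 with h | h
  · nlinarith [mul_nonneg (sub_nonneg.mpr h) (sq_nonneg s)]
  · nlinarith [mul_nonneg (sub_nonneg.mpr h) h1]

lemma speedRatio_mem_Icc (hγ : 0 < γ) (hs : s ∈ Icc (-1) 1) : speedRatio γ s ∈ Icc (-1) 1 := by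
  have hsD : |s| ≤ √(s ^ 2 + γ * (1 - s ^ 2)) :=
    abs_le_sqrt (by nlinarith [mul_nonneg hγ.le (show 0 ≤ 1 - s ^ 2 by nlinarith [hs.1, hs.2])])
  rw [mem_Icc, ← abs_le, speedRatio, abs_div, abs_of_nonneg (sqrt_nonneg _)]
  exact div_le_one_of_le₀ hsD (sqrt_nonneg _)

lemma strictMonoOn_speedRatio (hγ : 0 < γ) : StrictMonoOn (speedRatio γ) (Icc (-1) 1) := by
  intro a ha b hb hab
  set X := √(a ^ 2 + γ * (1 - a ^ 2))
  set Y := √(b ^ 2 + γ * (1 - b ^ 2))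
  have hX : 0 < X := sqrt_pos.mpr (sq_add_mul_one_sub_sq_pos hγ ha)
  have hY : 0 < Y := sqrt_pos.mpr (sq_add_mul_one_sub_sq_pos hγ hb)
  have key : (b * X - a * Y) * (b * X + a * Y) = γ * (b - a) * (b + a) := by
    linear_combination b ^ 2 * sq_sqrt (sq_add_mul_one_sub_sq_pos hγ ha).le
      - a ^ 2 * sq_sqrt (sq_add_mul_one_sub_sq_pos hγ hb).le
  rw [speedRatio, speedRatio, div_lt_div_iff₀ hX hY]
  have hγba := mul_pos hγ (sub_pos.mpr hab)
  rcases le_or_gt 0 a with ha0 | ha0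
  · have hsum : 0 < b * X + a * Y := by nlinarith [mul_nonneg ha0 hY.le]
    nlinarith
  rcases le_or_gt b 0 with hb0 | hb0
  · have hsum : b * X + a * Y < 0 := by nlinarith [mul_nonpos_of_nonpos_of_nonneg hb0 hX.le]
    nlinarith
  · nlinarith

lemma continuousOn_speedRatio (hγ : 0 < γ) : ContinuousOn (speedRatio γ) (Icc (-1) 1) :=
  continuousOn_id.div (by fun_prop) fun s hs => (sqrt_pos.mpr (sq_add_mul_one_sub_sq_pos hγ hs)).ne'

lemma one_sub_speedRatio_sq (hγ : 0 < γ) (hs : s ∈ Icc (-1) 1) :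
    1 - speedRatio γ s ^ 2 = γ * (1 - s ^ 2) / (s ^ 2 + γ * (1 - s ^ 2)) := by
  have hD := sq_add_mul_one_sub_sq_pos hγ hs
  rw [speedRatio, div_pow, sq_sqrt hD.le]
  field_simp
  ring

end speedRatio

noncomputable def massClosedForm (γ s : ℝ) : ℝ := 4 / √γ * arccos (-speedRatio γ s)

section massClosedForm

variable {γ : ℝ}

lemma massClosedForm_neg_one : massClosedForm γ (-1) = 0 := by
  simp [massClosedForm, speedRatio]

lemma massClosedForm_one : massClosedForm γ 1 = 4 * π / √γ := by
  simp [massClosedForm, speedRatio, div_mul_eq_mul_div]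

lemma continuousOn_massClosedForm (hγ : 0 < γ) : ContinuousOn (massClosedForm γ) (Icc (-1) 1) :=
  continuousOn_const.mul (continuous_arccos.comp_continuousOn (continuousOn_speedRatio hγ).neg)

lemma strictMonoOn_massClosedForm (hγ : 0 < γ) :
    StrictMonoOn (massClosedForm γ) (Icc (-1) 1) := by
  intro a ha b hb hab
  have hneg : ∀ s ∈ Icc (-1 : ℝ) 1, -speedRatio γ s ∈ Icc (-1) 1 := fun s hs => by
    rw [neg_mem_Icc_iff, neg_neg]
    exact speedRatio_mem_Icc hγ hs
  have := sqrt_pos.mpr hγ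
  exact mul_lt_mul_of_pos_left (strictAntiOn_arccos (hneg b hb) (hneg a ha)
    (neg_lt_neg (strictMonoOn_speedRatio hγ ha hb hab))) (by positivity)

end massClosedForm

lemma Phi_sq_of_mem_Ioo {γ s : ℝ} (hγ : 0 < γ) (hs : s ∈ Ioo (-1) 1) (x : ℝ) :
    Phi γ 1 (2 * s) x ^ 2 = 4 * (1 - s ^ 2) / √(s ^ 2 + γ * (1 - s ^ 2)) *
      (cosh (2 * √(1 - s ^ 2) * x) - speedRatio γ s)⁻¹ := by
  have hD := sq_add_mul_one_sub_sq_pos hγ (Ioo_subset_Icc_self hs)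
  have hu : 0 < 1 - s ^ 2 := by nlinarith [hs.1, hs.2]
  set R := √(s ^ 2 + γ * (1 - s ^ 2))
  have hR : 0 < R := sqrt_pos.mpr hD
  have hsR : s < R := (abs_lt_of_sq_lt_sq' (by rw [sq_sqrt hD.le]; nlinarith) hR.le).2
  have hk : √(4 * 1 - (2 * s) ^ 2) = 2 * √(1 - s ^ 2) := by
    rw [show 4 * 1 - (2 * s) ^ 2 = 2 ^ 2 * (1 - s ^ 2) by ring, sqrt_mul (by norm_num),
      sqrt_sq (by norm_num)]
  have hB : √((2 * s) ^ 2 + γ * (4 * 1 - (2 * s) ^ 2)) = 2 * R := by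
    rw [show (2 * s) ^ 2 + γ * (4 * 1 - (2 * s) ^ 2) = 2 ^ 2 * (s ^ 2 + γ * (1 - s ^ 2)) by ring,
      sqrt_mul (by norm_num), sqrt_sq (by norm_num)]
  have hden : 0 < R * cosh (2 * √(1 - s ^ 2) * x) - s := by
    nlinarith [one_le_cosh (2 * √(1 - s ^ 2) * x)]
  rw [Phi, if_neg (by rw [sqrt_one]; intro h; linarith [hs.2]), hk, hB,
    sq_sqrt (div_nonneg (by nlinarith) (by linarith)), show speedRatio γ s = s / R from rfl]
  field_simp
  ring

lemma massCurve_eq_massClosedForm_of_mem_Ioo {γ s : ℝ} (hγ : 0 < γ) (hs : s ∈ Ioo (-1) 1) :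
    massCurve γ s = massClosedForm γ s := by
  have hsI := Ioo_subset_Icc_self hs
  have hD := sq_add_mul_one_sub_sq_pos hγ hsI
  have hu : 0 < 1 - s ^ 2 := by nlinarith [hs.1, hs.2]
  have hρ := one_sub_speedRatio_sq hγ hsI
  have hρ1 : |speedRatio γ s| < 1 :=
    abs_lt_of_sq_lt_sq (by rw [one_pow]; linarith [div_pos (mul_pos hγ hu) hD]) zero_le_one
  have hsqrt : √(1 - speedRatio γ s ^ 2) = √γ * √(1 - s ^ 2) / √(s ^ 2 + γ * (1 - s ^ 2)) := by
    rw [hρ, sqrt_div' _ hD.le, sqrt_mul hγ.le]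
  have hsu := sqrt_pos.mpr hu
  have hsγ := sqrt_pos.mpr hγ
  have hsD := sqrt_pos.mpr hD
  rw [massCurve, funext (Phi_sq_of_mem_Ioo hγ hs), integral_const_mul,
    Measure.integral_comp_mul_left (fun y => (cosh y - speedRatio γ s)⁻¹),
    integral_inv_cosh_sub hρ1, hsqrt, smul_eq_mul, abs_of_pos (by positivity), massClosedForm]
  field_simp
  rw [sq_sqrt hu.le]

lemma massCurve_one {γ : ℝ} (hγ : 0 < γ) : massCurve γ 1 = 4 * π / √γ := by
  have h : ∀ x, Phi γ 1 (2 * 1) x ^ 2 = 8 * ((2 * x) ^ 2 + γ)⁻¹ := fun x => by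
    rw [Phi, if_pos (by rw [sqrt_one]), sq_sqrt (by positivity)]
    ring
  rw [massCurve, funext h, integral_const_mul, integral_inv_mul_sq_add two_pos hγ]
  ring

lemma eqOn_massCurve_massClosedForm {γ : ℝ} (hγ : 0 < γ) :
    EqOn (massCurve γ) (massClosedForm γ) (Ioc (-1) 1) := by
  intro s hs
  rcases hs.2.lt_or_eq with hs1 | rfl
  · exact massCurve_eq_massClosedForm_of_mem_Ioo hγ ⟨hs.1, hs1⟩
  · rw [massCurve_one hγ, massClosedForm_one]

/-- For `b > -3/16` (so `γ > 0`), the map `s ↦ M(φ_{1,2s})` is continuous, strictly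
increasing, and maps `(-1, 1]` bijectively onto `(0, 4π/√γ]`. -/
theorem stmt_6 (b γ : ℝ) (hb : -3 / 16 < b) (hγ : γ = 1 + 16 / 3 * b) :
    ContinuousOn (massCurve γ) (Ioc (-1) 1) ∧
    StrictMonoOn (massCurve γ) (Ioc (-1) 1) ∧
    BijOn (massCurve γ) (Ioc (-1) 1) (Ioc 0 (4 * Real.pi / Real.sqrt γ)) := by
  have hγ0 : 0 < γ := by rw [hγ]; linarith
  have hcont := continuousOn_massClosedForm hγ0
  have hmono := strictMonoOn_massClosedForm hγ0
  have heq := eqOn_massCurve_massClosedForm hγ0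
  have hbij := (hmono.injOn.mono Ioc_subset_Icc_self).bijOn_image
  rw [hcont.image_Ioc_of_strictMonoOn (by norm_num) hmono, massClosedForm_neg_one,
    massClosedForm_one] at hbij
  exact ⟨(hcont.mono Ioc_subset_Icc_self).congr heq,
    (hmono.mono Ioc_subset_Icc_self).congr heq.symm, hbij.congr heq.symm⟩
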